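/- arXiv:0912.2523 — 2 statements merged into one kernel-verified Lean document; each statement's English description precedes it below -/
import Mathlib

section
/- With μ_P(M) = binomial(M+P,P) and Q_P as defined recursively (Q_1(x)=x, Q_P(x_1,...,x_P) = μ_P(Σx_k - 1) + Q_{P-1}(x_1,...,x_{P-1})), for any P-tuple of nonnegative integers with sum s, the value Q_P(x_1,...,x_P) lies in the interval [μ_P(s-1), μ_P(s) - 1]. -/
/-- `mu P m = binomial(m+P, P)` for `m ≥ 0`, with `mu P (-1) = 0`. -/
def mu (P : ℕ) (m : ℤ) : ℕ := if m < 0 then 0 else (m.toNat + P).choose P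

/-- The state-embedding map `Q_P`: `Q_1(x_1) = x_1` and
`Q_P(x_1,…,x_P) = μ_P(x_1+⋯+x_P − 1) + Q_{P−1}(x_1,…,x_{P−1})`. -/
def Q : (P : ℕ) → (Fin P → ℕ) → ℕ
  | 0, _ => 0
  | P + 1, x => mu (P + 1) ((∑ i, (x i : ℤ)) - 1) + Q P (fun i => x i.castSucc)

/-! The upper bound is an induction on `P`: by Pascal's rule
`μ_{P+1}(s) = μ_{P+1}(s-1) + μ_P(s)`, so it suffices that `Q_P` of the first `P` coordinates
stays below `μ_P` of their sum, which is at most `μ_P(s)`. -/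

lemma mu_natCast (P n : ℕ) : mu P n = (n + P).choose P := by
  simp [mu]

/-- For `n = 0` both sides vanish: `mu` by its junk value at `-1`, the binomial since `P < P + 1`. -/
lemma mu_succ_natCast_sub_one (P n : ℕ) : mu (P + 1) ((n : ℤ) - 1) = (n + P).choose (P + 1) := by
  cases n with
  | zero => simp [mu]
  | succ n =>
    rw [Nat.cast_succ, add_sub_cancel_right, mu_natCast]
    congr 1
    omega

lemma sum_intCast_fin (P : ℕ) (x : Fin P → ℕ) : ∑ i, (x i : ℤ) = ((∑ i, x i : ℕ) : ℤ) := by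
  push_cast
  rfl

lemma Q_succ (P : ℕ) (x : Fin (P + 1) → ℕ) :
    Q (P + 1) x = (∑ i, x i + P).choose (P + 1) + Q P (fun i => x i.castSucc) := by
  rw [Q, sum_intCast_fin, mu_succ_natCast_sub_one]

lemma Q_lt_choose (P : ℕ) (x : Fin P → ℕ) : Q P x < (∑ i, x i + P).choose P := by
  induction P with
  | zero => simp [Q]
  | succ P ih =>
    have hsum : ∑ i : Fin P, x i.castSucc ≤ ∑ i, x i := by
      rw [Fin.sum_univ_castSucc]
      exact Nat.le_add_right _ _
    calc Q (P + 1) x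
        = (∑ i, x i + P).choose (P + 1) + Q P (fun i => x i.castSucc) := Q_succ P x
      _ < (∑ i, x i + P).choose (P + 1) + (∑ i : Fin P, x i.castSucc + P).choose P :=
          Nat.add_lt_add_left (ih _) _
      _ ≤ (∑ i, x i + P).choose (P + 1) + (∑ i, x i + P).choose P := by
          gcongr
      _ = (∑ i, x i + (P + 1)).choose (P + 1) := by
          rw [← add_assoc, Nat.choose_succ_succ', add_comm]

lemma Q_lt_mu (P : ℕ) (x : Fin P → ℕ) : Q P x < mu P (∑ i, (x i : ℤ)) := by
  rw [sum_intCast_fin, mu_natCast]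
  exact Q_lt_choose P x

lemma mu_sum_sub_one_le_Q (P : ℕ) (x : Fin P → ℕ) : mu P ((∑ i, (x i : ℤ)) - 1) ≤ Q P x := by
  cases P with
  | zero => simp [mu]
  | succ P => exact Nat.le_add_right _ _

theorem Q_mem_interval_general (P : ℕ) (x : Fin P → ℕ) :
    mu P ((∑ i, (x i : ℤ)) - 1) ≤ Q P x ∧
    Q P x ≤ mu P (∑ i, (x i : ℤ)) - 1 :=
  ⟨mu_sum_sub_one_le_Q P x, Nat.le_sub_one_of_lt (Q_lt_mu P x)⟩

theorem Q_mem_interval (P : ℕ) (hP : 1 ≤ P) (x : Fin P → ℕ) :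
    mu P ((∑ i, (x i : ℤ)) - 1) ≤ Q P x ∧
    Q P x ≤ mu P (∑ i, (x i : ℤ)) - 1 :=
  Q_mem_interval_general P x
end

section
/- For the single-player chain with M labels and lot size L, the matrix T with entries T_{j,k} = binomial(M,L)^{−1} binomial(M−k, j−k) binomial(k, L−j+k) (zero when these are undefined) satisfies T = E Λ E, where Λ is diagonal with Λ_{j,j} = binomial(j,L)/binomial(M,L) and E_{j,k} = binomial(M−k, M−j)(−1)^{M−j}, for indices j,k = 0,...,M−1. -/
/-!
Entrywise, `(E Λ E) j k = C(M,L)⁻¹ ∑ₘ C(M-k, M-m) C(M-m, M-j) C(m,L) (-1)^(j+m)`, and only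
`k ≤ m ≤ j` contribute. Trinomial revision pulls out `C(M-k, j-k)`; with `d = j - k` and
`m = k + i` what is left is `∑ᵢ (-1)^(d-i) C(d,i) C(k+i, L)`, the `d`-th forward difference of
`x ↦ C(x, L)` at `k`, which is `C(k, L-d)` (and `0` once `d > L`).
-/

open Finset

lemma fwdDiff_iter_choose_eq_ite (L d : ℕ) :
    (fwdDiff 1)^[d] (fun x ↦ x.choose L : ℕ → ℤ) =
      fun x ↦ if d ≤ L then (x.choose (L - d) : ℤ) else 0 := by
  induction d with
  | zero => simp
  | succ d ih =>
    rw [Function.iterate_succ_apply', ih]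
    rcases lt_trichotomy d L with h | rfl | h
    · have hL : L - d = (L - (d + 1)) + 1 := by omega
      simp only [if_pos h.le, if_pos (Nat.succ_le_of_lt h), hL, fwdDiff_choose]
    · simp
    · simp [h.not_ge, (Nat.lt_succ_of_lt h).not_ge]

lemma sum_range_neg_one_pow_mul_choose_mul_choose_add (L d k : ℕ) :
    ∑ i ∈ range (d + 1), (-1 : ℤ) ^ (d - i) * d.choose i * (k + i).choose L =
      if d ≤ L then (k.choose (L - d) : ℤ) else 0 := by
  have h := congrFun (fwdDiff_iter_choose_eq_ite L d) k
  rw [fwdDiff_iter_eq_sum_shift] at h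
  simpa using h

lemma choose_mul_choose_sub_sub {n k j i : ℕ} (hkj : k + i ≤ j) (hj : j ≤ n) :
    (n - k).choose (n - (k + i)) * (n - (k + i)).choose (n - j) =
      (n - k).choose (j - k) * (j - k).choose i := by
  rw [Nat.choose_mul (show n - j ≤ n - (k + i) by omega), show n - k - (n - j) = j - k by omega,
    show n - (k + i) - (n - j) = j - k - i by omega, Nat.choose_symm (by omega),
    Nat.choose_symm_of_eq_add (show n - k = (n - j) + (j - k) by omega)]

lemma sum_range_choose_mul_choose_mul_choose (n L j k : ℕ) (hj : j < n) (hk : k < n) :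
    ∑ m ∈ range n, ((n - k).choose (n - m) * (n - m).choose (n - j) * m.choose L : ℤ) *
        (-1) ^ ((n - j) + (n - m)) =
      if k ≤ j ∧ j - k ≤ L then ((n - k).choose (j - k) * k.choose (L - (j - k)) : ℤ) else 0 := by
  have hsupp : ∀ m ∈ range n, m ∉ Ico k (j + 1) →
      ((n - k).choose (n - m) * (n - m).choose (n - j) * m.choose L : ℤ) *
        (-1) ^ ((n - j) + (n - m)) = 0 := by
    intro m _ hm
    rw [mem_Ico, not_and_or, not_le, not_lt] at hm
    rcases hm with hm | hm
    · simp [Nat.choose_eq_zero_of_lt (show n - k < n - m by omega)]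
    · simp [Nat.choose_eq_zero_of_lt (show n - m < n - j by omega)]
  rw [← sum_subset (fun m hm => by rw [mem_range]; rw [mem_Ico] at hm; omega) hsupp,
    sum_Ico_eq_sum_range]
  by_cases hkj : k ≤ j
  · have hterm : ∀ i ∈ range (j + 1 - k),
        ((n - k).choose (n - (k + i)) * (n - (k + i)).choose (n - j) * (k + i).choose L : ℤ) *
          (-1) ^ ((n - j) + (n - (k + i))) =
        (n - k).choose (j - k) * ((-1) ^ (j - k - i) * (j - k).choose i * (k + i).choose L) := by
      intro i hi
      rw [mem_range] at hi
      have hsign : (n - j) + (n - (k + i)) = 2 * (n - j) + (j - k - i) := by omega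
      rw [hsign, pow_add, pow_mul, neg_one_sq, one_pow, one_mul, ← Nat.cast_mul,
        choose_mul_choose_sub_sub (by omega) hj.le]
      push_cast
      ring
    rw [sum_congr rfl hterm, ← mul_sum, Nat.sub_add_comm hkj,
      sum_range_neg_one_pow_mul_choose_mul_choose_add]
    simp [hkj, mul_ite]
  · simp [hkj, show j + 1 - k = 0 by omega]

theorem T_diagonalization_general (M L : ℕ)
    (T E Λ : Matrix (Fin M) (Fin M) ℝ)
    (hT : ∀ j k : Fin M, T j k =
      if (k : ℕ) ≤ (j : ℕ) ∧ (j : ℕ) - (k : ℕ) ≤ L then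
        ((M.choose L : ℝ))⁻¹ * ((M - (k : ℕ)).choose ((j : ℕ) - (k : ℕ)) : ℝ) *
          ((k : ℕ).choose (L - ((j : ℕ) - (k : ℕ))) : ℝ)
      else 0)
    (hΛ : Λ = Matrix.diagonal fun j : Fin M => ((j : ℕ).choose L : ℝ) / (M.choose L : ℝ))
    (hE : ∀ j k : Fin M, E j k = ((M - (k : ℕ)).choose (M - (j : ℕ)) : ℝ) * (-1) ^ (M - (j : ℕ))) :
    T = E * Λ * E := by
  ext j k
  have hsum := congrArg (Int.cast : ℤ → ℝ)
    (sum_range_choose_mul_choose_mul_choose M L j k j.isLt k.isLt)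
  push_cast at hsum
  calc T j k = (M.choose L : ℝ)⁻¹ * ∑ m ∈ range M,
        ((M - k).choose (M - m) * (M - m).choose (M - j) * m.choose L : ℝ) *
          (-1) ^ ((M - j) + (M - m)) := by
        rw [hT, hsum]
        split_ifs <;> ring
    _ = (E * Λ * E) j k := by
      rw [hΛ, Matrix.mul_apply, mul_sum, ← Fin.sum_univ_eq_sum_range]
      simp only [Matrix.mul_diagonal, hE]
      refine sum_congr rfl fun m _ => ?_
      rw [pow_add]
      ring

theorem T_diagonalization (M L : ℕ) (hM : 1 ≤ M)
    (T E Λ : Matrix (Fin M) (Fin M) ℝ)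
    (hT : ∀ j k : Fin M, T j k =
      if (k : ℕ) ≤ (j : ℕ) ∧ (j : ℕ) - (k : ℕ) ≤ L then
        ((M.choose L : ℝ))⁻¹ * ((M - (k : ℕ)).choose ((j : ℕ) - (k : ℕ)) : ℝ) *
          ((k : ℕ).choose (L - ((j : ℕ) - (k : ℕ))) : ℝ)
      else 0)
    (hΛ : Λ = Matrix.diagonal fun j : Fin M => ((j : ℕ).choose L : ℝ) / (M.choose L : ℝ))
    (hE : ∀ j k : Fin M, E j k = ((M - (k : ℕ)).choose (M - (j : ℕ)) : ℝ) * (-1) ^ (M - (j : ℕ))) :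
    T = E * Λ * E :=
  T_diagonalization_general M L T E Λ hT hΛ hE
end
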